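/- If a finite set V of segments of [1,L] is pairwise non-overlapping, then in the filtered graph (edge s' → s iff j' < i and no segment of V lies strictly between), the edge relation linearly orders V into a single path: each segment except the last (by start position) has exactly one outgoing edge, namely to its successor in start-position order, so |E| = |V| − 1 when V is nonempty. -/
import Mathlib


def FilteredEdge (V : Finset (ℕ × ℕ)) (s' s : ℕ × ℕ) : Prop :=
  s' ∈ V ∧ s ∈ V ∧ s'.2 < s.1 ∧ ¬ ∃ t ∈ V, s'.2 < t.1 ∧ t.2 < s.1

instance (V : Finset (ℕ × ℕ)) : DecidablePred (fun p : (ℕ × ℕ) × (ℕ × ℕ) => FilteredEdge V p.1 p.2) := by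
  unfold FilteredEdge; infer_instance

theorem filtered_nonoverlapping_single_path (L : ℕ) (V : Finset (ℕ × ℕ))
    (hV : V.Nonempty)
    (hseg : ∀ s ∈ V, 1 ≤ s.1 ∧ s.1 ≤ s.2 ∧ s.2 ≤ L)
    (hdisj : ∀ s ∈ V, ∀ t ∈ V, s ≠ t → s.2 < t.1 ∨ t.2 < s.1) :
    (∀ s' ∈ V, (∃ t ∈ V, s'.1 < t.1) →
      ∃! s, s ∈ V ∧ FilteredEdge V s' s ∧ ∀ t ∈ V, s'.1 < t.1 → s.1 ≤ t.1) ∧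
    ((V ×ˢ V).filter (fun p => FilteredEdge V p.1 p.2)).card = V.card - 1 := by
  -- start positions are injective on V
  have hinj : ∀ s ∈ V, ∀ t ∈ V, s.1 = t.1 → s = t := by
    intro s hs t ht h
    by_contra hne
    rcases hdisj s hs t ht hne with h1 | h1
    · have := (hseg s hs).2.1; omega
    · have := (hseg t ht).2.1; omega
  -- s.1 < t.1 implies s.2 < t.1
  have hlt : ∀ s ∈ V, ∀ t ∈ V, s.1 < t.1 → s.2 < t.1 := by
    intro s hs t ht h
    have hne : s ≠ t := by intro e; subst e; omega
    rcases hdisj s hs t ht hne with h1 | h1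
    · exact h1
    · have h2 := (hseg s hs).2.1; have h3 := (hseg t ht).2.1; omega
  -- characterization of edges in terms of start positions
  have hedge : ∀ s' s, FilteredEdge V s' s ↔
      s' ∈ V ∧ s ∈ V ∧ s'.1 < s.1 ∧ ∀ t ∈ V, s'.1 < t.1 → s.1 ≤ t.1 := by
    intro s' s
    constructor
    · rintro ⟨hs', hs, hj, hno⟩
      have h1 := (hseg s' hs').2.1
      refine ⟨hs', hs, by omega, ?_⟩
      intro t ht hlt'
      by_contra hc
      push_neg at hc
      exact hno ⟨t, ht, hlt s' hs' t ht hlt', hlt t ht s hs hc⟩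
    · rintro ⟨hs', hs, hj, hmin⟩
      refine ⟨hs', hs, hlt s' hs' s hs hj, ?_⟩
      rintro ⟨t, ht, h1, h2⟩
      have h3 := (hseg s' hs').2.1
      have h4 := (hseg t ht).2.1
      have := hmin t ht (by omega)
      omega
  constructor
  · rintro s' hs' ⟨t0, ht0, hlt0⟩
    obtain ⟨s, hsf, hsmin⟩ := (V.filter (fun t => s'.1 < t.1)).exists_min_image Prod.fst
      ⟨t0, Finset.mem_filter.mpr ⟨ht0, hlt0⟩⟩
    rw [Finset.mem_filter] at hsf
    have hmin' : ∀ t ∈ V, s'.1 < t.1 → s.1 ≤ t.1 := fun t ht h =>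
      hsmin t (Finset.mem_filter.mpr ⟨ht, h⟩)
    refine ⟨s, ⟨hsf.1, (hedge s' s).mpr ⟨hs', hsf.1, hsf.2, hmin'⟩, hmin'⟩, ?_⟩
    rintro y ⟨hy, hye, hymin⟩
    rw [hedge] at hye
    apply hinj y hy s hsf.1
    have h1 := hymin s hsf.1 hsf.2
    have h2 := hmin' y hy hye.2.2.1
    omega
  · obtain ⟨m, hm, hmmin⟩ := V.exists_min_image Prod.fst hV
    have key : ((V ×ˢ V).filter (fun p => FilteredEdge V p.1 p.2)).card = (V.erase m).card := by
      apply Finset.card_bij (fun p _ => p.2)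
      · intro p hp
        rw [Finset.mem_filter, hedge] at hp
        obtain ⟨hp1, hp2, hplt, _⟩ := hp.2
        apply Finset.mem_erase.mpr
        refine ⟨?_, hp2⟩
        intro e
        have := hmmin p.1 hp1
        rw [e] at hplt
        omega
      · intro p hp q hq h
        rw [Finset.mem_filter, hedge] at hp hq
        obtain ⟨hp1, hp2, hplt, hpmin⟩ := hp.2
        obtain ⟨hq1, hq2, hqlt, hqmin⟩ := hq.2
        have h' : p.2.1 = q.2.1 := by rw [h]
        have heq : p.1.1 = q.1.1 := by
          rcases lt_trichotomy p.1.1 q.1.1 with h1 | h1 | h1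
          · have := hpmin q.1 hq1 h1; omega
          · exact h1
          · have := hqmin p.1 hp1 h1; omega
        exact Prod.ext (hinj p.1 hp1 q.1 hq1 heq) h
      · intro s hs
        rw [Finset.mem_erase] at hs
        have hms : m.1 < s.1 := by
          rcases lt_or_eq_of_le (hmmin s hs.2) with h | h
          · exact h
          · exact absurd (hinj m hm s hs.2 h).symm hs.1
        obtain ⟨s', hs'f, hs'max⟩ := (V.filter (fun t => t.1 < s.1)).exists_max_image Prod.fst
          ⟨m, Finset.mem_filter.mpr ⟨hm, hms⟩⟩
        rw [Finset.mem_filter] at hs'f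
        refine ⟨(s', s), Finset.mem_filter.mpr ⟨Finset.mem_product.mpr ⟨hs'f.1, hs.2⟩,
          (hedge s' s).mpr ⟨hs'f.1, hs.2, hs'f.2, ?_⟩⟩, rfl⟩
        intro t ht hlt'
        by_contra hc
        push_neg at hc
        have := hs'max t (Finset.mem_filter.mpr ⟨ht, hc⟩)
        omega
    rw [key, Finset.card_erase_of_mem hm]
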